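/- Convergence of the controlled dynamics (Theorem 1, convergence part): for any control sets C^X, C^Y ⊆ V and any revision sequence satisfying Assumption 1, there exists an equilibrium (x*,y*) of the controlled dynamics such that the controlled trajectory satisfies x(t) = x* for all sufficiently large t (finite-time convergence of actions) and y(t) → y* as t → ∞ (asymptotic convergence of opinions), with both x(t) and y(t) nondecreasing in t. -/
import Mathlib


/-- The quantity `δ_i(z)` determining the best-response action. -/
noncomputable def delta (n : ℕ) (A W : Fin n → Fin n → ℝ) (l b : Fin n → ℝ)
    (i : Fin n) (x y : Fin n → ℝ) : ℝ :=
  2 * b i * (1 - l i) * ∑ j, W i j * y j + (1 - b i) * ∑ j, A i j * x j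

/-- Assumption 1 on the revision sequence: there is `T < ∞` such that every
agent activates at least once in every window of `T` consecutive time steps. -/
def RevOK (n : ℕ) (R : ℕ → Finset (Fin n)) : Prop :=
  ∃ T : ℕ, ∀ t : ℕ, ∀ i : Fin n, ∃ s, s < T ∧ i ∈ R (t + s)

/-- The controlled coevolutionary trajectory with control sets `CX, CY`:
controlled coordinates are pinned to `+1` for all `t ≥ 0`, uncontrolled ones
start at `-1` and follow the best-response dynamics when activated. -/
def IsCtrlTraj (n : ℕ) (A W : Fin n → Fin n → ℝ) (l b : Fin n → ℝ)
    (R : ℕ → Finset (Fin n)) (CX CY : Finset (Fin n))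
    (x y : ℕ → Fin n → ℝ) : Prop :=
  (∀ i ∈ CX, ∀ t, x t i = 1) ∧
  (∀ i ∈ CY, ∀ t, y t i = 1) ∧
  (∀ i, i ∉ CX → x 0 i = -1) ∧
  (∀ i, i ∉ CY → y 0 i = -1) ∧
  (∀ t, ∀ i, i ∉ CX →
    x (t + 1) i =
      if i ∈ R t then
        if 0 < delta n A W l b i (x t) (y t) then 1
        else if delta n A W l b i (x t) (y t) < 0 then -1
        else x t i
      else x t i) ∧
  (∀ t, ∀ i, i ∉ CY →
    y (t + 1) i =
      if i ∈ R t then (1 - l i) * (∑ j, W i j * y t j) + l i * x (t + 1) i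
      else y t i)

/-- The trajectory reaches the `+1` consensus (actions) in finite time. -/
def Reaches (n : ℕ) (x : ℕ → Fin n → ℝ) : Prop :=
  ∃ T : ℕ, ∀ t, T ≤ t → ∀ i, x t i = 1

/-- Equilibrium of the controlled dynamics with control sets `CX, CY`. -/
def CtrlEquilibrium (n : ℕ) (A W : Fin n → Fin n → ℝ) (l b : Fin n → ℝ)
    (CX CY : Finset (Fin n)) (x y : Fin n → ℝ) : Prop :=
  (∀ i, x i = -1 ∨ x i = 1) ∧ (∀ i, y i ∈ Set.Icc (-1 : ℝ) 1) ∧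
  (∀ i ∈ CX, x i = 1) ∧ (∀ i ∈ CY, y i = 1) ∧
  (∀ i, i ∉ CX → x i * delta n A W l b i x y ≥ 0) ∧
  (∀ i, i ∉ CY → y i = (1 - l i) * (∑ j, W i j * y j) + l i * x i)

/-- Theorem 1, convergence part. -/
theorem controlled_dynamics_convergence
    (n : ℕ) (A W : Fin n → Fin n → ℝ) (l b : Fin n → ℝ)
    (hA0 : ∀ i j, 0 ≤ A i j) (hA1 : ∀ i j, A i j ≤ 1) (hArow : ∀ i, ∑ j, A i j = 1)
    (hW0 : ∀ i j, 0 ≤ W i j) (hW1 : ∀ i j, W i j ≤ 1) (hWrow : ∀ i, ∑ j, W i j = 1)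
    (hl : ∀ i, 0 < l i ∧ l i ≤ 1) (hb : ∀ i, 0 < b i ∧ b i ≤ 1)
    (R : ℕ → Finset (Fin n)) (hR : RevOK n R)
    (CX CY : Finset (Fin n))
    (x y : ℕ → Fin n → ℝ)
    (htraj : IsCtrlTraj n A W l b R CX CY x y) :
    ∃ xs ys : Fin n → ℝ,
      CtrlEquilibrium n A W l b CX CY xs ys ∧
      (∃ T : ℕ, ∀ t, T ≤ t → ∀ i, x t i = xs i) ∧
      (∀ i, Filter.Tendsto (fun t => y t i) Filter.atTop (nhds (ys i))) ∧
      (∀ t : ℕ, ∀ i : Fin n, x t i ≤ x (t + 1) i ∧ y t i ≤ y (t + 1) i) := by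
  classical
  obtain ⟨hCX, hCY, hx0, hy0, hxup, hyup⟩ := htraj
  have hl0 : ∀ i, (0:ℝ) ≤ 1 - l i := fun i => by linarith [(hl i).2]
  have hb0 : ∀ i, (0:ℝ) ≤ 1 - b i := fun i => by linarith [(hb i).2]
  have hc1 : ∀ i, (0:ℝ) ≤ 2 * b i * (1 - l i) := fun i => by
    have := (hb i).1; have := hl0 i; positivity
  -- actions take values in {-1, 1}
  have hx01 : ∀ t i, x t i = -1 ∨ x t i = 1 := by
    intro t
    induction t with
    | zero =>
      intro i
      by_cases h : i ∈ CX
      · exact Or.inr (hCX i h 0)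
      · exact Or.inl (hx0 i h)
    | succ t ih =>
      intro i
      by_cases h : i ∈ CX
      · exact Or.inr (hCX i h (t + 1))
      · rw [hxup t i h]
        split_ifs with h1 h2 h3
        · exact Or.inr rfl
        · exact Or.inl rfl
        · exact ih i
        · exact ih i
  have hxlo : ∀ t i, (-1:ℝ) ≤ x t i := by
    intro t i; rcases hx01 t i with h | h <;> rw [h] <;> norm_num
  have hxhi : ∀ t i, x t i ≤ 1 := by
    intro t i; rcases hx01 t i with h | h <;> rw [h] <;> norm_num
  -- opinions stay in [-1, 1]
  have hy_mem : ∀ t i, -1 ≤ y t i ∧ y t i ≤ 1 := by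
    intro t
    induction t with
    | zero =>
      intro i
      by_cases h : i ∈ CY
      · rw [hCY i h 0]; norm_num
      · rw [hy0 i h]; norm_num
    | succ t ih =>
      intro i
      by_cases h : i ∈ CY
      · rw [hCY i h (t + 1)]; norm_num
      · rw [hyup t i h]
        split_ifs with hRt
        · have hs1 : ∑ j, W i j * y t j ≤ 1 := by
            calc ∑ j, W i j * y t j ≤ ∑ j, W i j * 1 :=
                  Finset.sum_le_sum fun j _ =>
                    mul_le_mul_of_nonneg_left (ih j).2 (hW0 i j)
              _ = 1 := by simp [hWrow i]
          have hs2 : (-1:ℝ) ≤ ∑ j, W i j * y t j := by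
            calc (-1:ℝ) = ∑ j, W i j * (-1) := by simp [hWrow i]
              _ ≤ ∑ j, W i j * y t j :=
                  Finset.sum_le_sum fun j _ =>
                    mul_le_mul_of_nonneg_left (ih j).1 (hW0 i j)
          have e1 := mul_le_mul_of_nonneg_left hs2 (hl0 i)
          have e2 := mul_le_mul_of_nonneg_left hs1 (hl0 i)
          have e3 := mul_le_mul_of_nonneg_left (hxlo (t + 1) i) (hl i).1.le
          have e4 := mul_le_mul_of_nonneg_left (hxhi (t + 1) i) (hl i).1.le
          constructor <;> nlinarith
        · exact ih i
  have hSlo : ∀ t i, (-1:ℝ) ≤ ∑ j, W i j * y t j := by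
    intro t i
    calc (-1:ℝ) = ∑ j, W i j * (-1) := by simp [hWrow i]
      _ ≤ ∑ j, W i j * y t j :=
          Finset.sum_le_sum fun j _ =>
            mul_le_mul_of_nonneg_left (hy_mem t j).1 (hW0 i j)
  -- monotonicity of delta in the state
  have hdmono : ∀ (i : Fin n) (u v u' v' : Fin n → ℝ), (∀ j, u j ≤ u' j) →
      (∀ j, v j ≤ v' j) →
      delta n A W l b i u v ≤ delta n A W l b i u' v' := by
    intro i u v u' v' hu hv
    unfold delta
    have h1 : ∑ j, W i j * v j ≤ ∑ j, W i j * v' j :=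
      Finset.sum_le_sum fun j _ => mul_le_mul_of_nonneg_left (hv j) (hW0 i j)
    have h2 : ∑ j, A i j * u j ≤ ∑ j, A i j * u' j :=
      Finset.sum_le_sum fun j _ => mul_le_mul_of_nonneg_left (hu j) (hA0 i j)
    have e1 := mul_le_mul_of_nonneg_left h1 (hc1 i)
    have e2 := mul_le_mul_of_nonneg_left h2 (hb0 i)
    linarith
  -- one monotone step, given the invariants at time t
  have hmonostep : ∀ t : ℕ,
      (∀ i, i ∉ CX → x t i = 1 → 0 ≤ delta n A W l b i (x t) (y t)) →
      (∀ i, i ∉ CY → y t i ≤ (1 - l i) * (∑ j, W i j * y t j) + l i * x t i) →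
      (∀ i, x t i ≤ x (t + 1) i) ∧ (∀ i, y t i ≤ y (t + 1) i) := by
    intro t invX invY
    have hmx : ∀ i, x t i ≤ x (t + 1) i := by
      intro i
      by_cases h : i ∈ CX
      · rw [hCX i h t, hCX i h (t + 1)]
      · rw [hxup t i h]
        split_ifs with hRt h1 h2
        · exact hxhi t i
        · rcases hx01 t i with h' | h'
          · rw [h']
          · exact absurd (invX i h h') (by linarith)
        · exact le_refl _
        · exact le_refl _
    refine ⟨hmx, ?_⟩
    intro i
    by_cases h : i ∈ CY
    · rw [hCY i h t, hCY i h (t + 1)]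
    · rw [hyup t i h]
      split_ifs with hRt
      · have e := mul_le_mul_of_nonneg_left (hmx i) (hl i).1.le
        have := invY i h
        linarith
      · exact le_refl _
  -- the invariants hold at every time
  have hP : ∀ t : ℕ,
      (∀ i, i ∉ CX → x t i = 1 → 0 ≤ delta n A W l b i (x t) (y t)) ∧
      (∀ i, i ∉ CY → y t i ≤ (1 - l i) * (∑ j, W i j * y t j) + l i * x t i) := by
    intro t
    induction t with
    | zero =>
      constructor
      · intro i hi hxi
        rw [hx0 i hi] at hxi; norm_num at hxi
      · intro i hi
        rw [hy0 i hi]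
        have e1 := mul_le_mul_of_nonneg_left (hSlo 0 i) (hl0 i)
        have e2 := mul_le_mul_of_nonneg_left (hxlo 0 i) (hl i).1.le
        linarith
    | succ t ih =>
      obtain ⟨invX, invY⟩ := ih
      obtain ⟨hmx, hmy⟩ := hmonostep t invX invY
      constructor
      · intro i hi hxi
        have hδ : 0 ≤ delta n A W l b i (x t) (y t) := by
          by_cases hRt : i ∈ R t
          · rw [hxup t i hi, if_pos hRt] at hxi
            by_contra hneg
            push_neg at hneg
            rw [if_neg (by linarith), if_pos (by linarith)] at hxi
            norm_num at hxi
          · rw [hxup t i hi, if_neg hRt] at hxi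
            exact invX i hi hxi
        exact le_trans hδ (hdmono i (x t) (y t) (x (t + 1)) (y (t + 1)) hmx hmy)
      · intro i hi
        have hsum : ∑ j, W i j * y t j ≤ ∑ j, W i j * y (t + 1) j :=
          Finset.sum_le_sum fun j _ => mul_le_mul_of_nonneg_left (hmy j) (hW0 i j)
        have e1 := mul_le_mul_of_nonneg_left hsum (hl0 i)
        have e2 := mul_le_mul_of_nonneg_left (hmx i) (hl i).1.le
        rw [hyup t i hi]
        split_ifs with hRt
        · linarith
        · have := invY i hi
          linarith
  have hmono : ∀ t : ℕ, (∀ i, x t i ≤ x (t + 1) i) ∧ (∀ i, y t i ≤ y (t + 1) i) :=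
    fun t => hmonostep t (hP t).1 (hP t).2
  have hxmono : ∀ i, Monotone fun t => x t i :=
    fun i => monotone_nat_of_le_succ fun t => (hmono t).1 i
  have hymono : ∀ i, Monotone fun t => y t i :=
    fun i => monotone_nat_of_le_succ fun t => (hmono t).2 i
  -- actions are eventually constant
  have hxev : ∀ i, ∃ Ti : ℕ, ∀ t, Ti ≤ t → x t i = x Ti i := by
    intro i
    by_cases h : ∃ t0, x t0 i = 1
    · obtain ⟨t0, h0⟩ := h
      refine ⟨t0, fun t ht => ?_⟩
      have h1 : x t0 i ≤ x t i := hxmono i ht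
      rcases hx01 t i with h' | h'
      · rw [h0] at h1; rw [h'] at h1; linarith
      · rw [h', h0]
    · push_neg at h
      refine ⟨0, fun t ht => ?_⟩
      rcases hx01 t i with h' | h'
      · rcases hx01 0 i with h0 | h0
        · rw [h', h0]
        · exact absurd h0 (h 0)
      · exact absurd h' (h t)
  choose Ti hTi using hxev
  obtain ⟨T, hTle⟩ : ∃ T : ℕ, ∀ i, Ti i ≤ T :=
    ⟨Finset.univ.sup Ti, fun i => Finset.le_sup (Finset.mem_univ i)⟩
  have hxconst : ∀ t, T ≤ t → ∀ i, x t i = x T i := by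
    intro t ht i
    rw [hTi i t (le_trans (hTle i) ht), hTi i T (hTle i)]
  -- opinions converge to their supremum
  have hybdd : ∀ i, BddAbove (Set.range fun t => y t i) := by
    intro i
    refine ⟨1, ?_⟩
    rintro _ ⟨t, rfl⟩
    exact (hy_mem t i).2
  have hyt : ∀ i, Filter.Tendsto (fun t => y t i) Filter.atTop
      (nhds (⨆ t, y t i)) :=
    fun i => tendsto_atTop_ciSup (hymono i) (hybdd i)
  have hxt : ∀ i, Filter.Tendsto (fun t => x t i) Filter.atTop (nhds (x T i)) :=
    fun i => tendsto_atTop_of_eventually_const fun t ht => hxconst t ht i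
  -- delta converges along the trajectory
  have hdt : ∀ i, Filter.Tendsto (fun t => delta n A W l b i (x t) (y t))
      Filter.atTop (nhds (delta n A W l b i (x T) (fun j => ⨆ t, y t j))) := by
    intro i
    unfold delta
    refine Filter.Tendsto.add ?_ ?_
    · exact Filter.Tendsto.const_mul _
        (tendsto_finset_sum _ fun j _ => (hyt j).const_mul (W i j))
    · exact Filter.Tendsto.const_mul _
        (tendsto_finset_sum _ fun j _ => (hxt j).const_mul (A i j))
  -- each agent revises frequently
  have hfreq : ∀ i, ∃ᶠ t in Filter.atTop, i ∈ R t := by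
    obtain ⟨T', hT'⟩ := hR
    intro i
    rw [Filter.frequently_atTop]
    intro a
    obtain ⟨s, _, hs⟩ := hT' a i
    exact ⟨a + s, Nat.le_add_right a s, hs⟩
  refine ⟨x T, fun j => ⨆ t, y t j, ⟨fun i => hx01 T i, ?_, fun i hi => hCX i hi T,
    ?_, ?_, ?_⟩, ⟨T, hxconst⟩, hyt, fun t i => ⟨(hmono t).1 i, (hmono t).2 i⟩⟩
  · intro i
    refine Set.mem_Icc.mpr ⟨le_trans (hy_mem 0 i).1 (le_ciSup (hybdd i) 0),
      ciSup_le fun t => (hy_mem t i).2⟩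
  · intro i hi
    have hc : Filter.Tendsto (fun t => y t i) Filter.atTop (nhds 1) :=
      Filter.Tendsto.congr (fun t => (hCY i hi t).symm) tendsto_const_nhds
    exact tendsto_nhds_unique (hyt i) hc
  · -- action equilibrium condition
    intro i hi
    rcases hx01 T i with h | h
    · have hδ : delta n A W l b i (x T) (fun j => ⨆ t, y t j) ≤ 0 := by
        by_contra hpos
        push_neg at hpos
        have hev : ∀ᶠ t in Filter.atTop, 0 < delta n A W l b i (x t) (y t) :=
          (hdt i).eventually (lt_mem_nhds hpos)
        have hev2 : ∀ᶠ t in Filter.atTop, T ≤ t := Filter.eventually_ge_atTop T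
        obtain ⟨t, hRt, hδt, hTt⟩ := ((hfreq i).and_eventually (hev.and hev2)).exists
        have h1 := hxup t i hi
        rw [if_pos hRt, if_pos hδt] at h1
        have h2 : x (t + 1) i = x T i := hxconst (t + 1) (le_trans hTt (Nat.le_succ t)) i
        rw [h1, h] at h2
        norm_num at h2
      rw [h]
      nlinarith
    · have hev : ∀ᶠ t in Filter.atTop, 0 ≤ delta n A W l b i (x t) (y t) := by
        filter_upwards [Filter.eventually_ge_atTop T] with t ht
        exact (hP t).1 i hi (by rw [hxconst t ht i]; exact h)
      have hδ : 0 ≤ delta n A W l b i (x T) (fun j => ⨆ t, y t j) :=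
        ge_of_tendsto (hdt i) hev
      rw [h]
      linarith
  · -- opinion equilibrium condition
    intro i hi
    obtain ⟨φ, hφmono, hφR⟩ := Filter.extraction_of_frequently_atTop (hfreq i)
    have hφ1 : Filter.Tendsto (fun k => φ k + 1) Filter.atTop Filter.atTop :=
      Filter.tendsto_atTop_mono (fun k => Nat.le_succ (φ k)) hφmono.tendsto_atTop
    have hlim1 : Filter.Tendsto (fun k => y (φ k + 1) i) Filter.atTop
        (nhds (⨆ t, y t i)) := (hyt i).comp hφ1
    have hlim2 : Filter.Tendsto
        (fun k => (1 - l i) * (∑ j, W i j * y (φ k) j) + l i * x (φ k + 1) i)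
        Filter.atTop
        (nhds ((1 - l i) * (∑ j, W i j * ⨆ t, y t j) + l i * x T i)) := by
      refine Filter.Tendsto.add ?_ ?_
      · exact Filter.Tendsto.const_mul _
          (tendsto_finset_sum _ fun j _ =>
            ((hyt j).comp hφmono.tendsto_atTop).const_mul (W i j))
      · exact ((hxt i).comp hφ1).const_mul (l i)
    have heq : ∀ k, y (φ k + 1) i =
        (1 - l i) * (∑ j, W i j * y (φ k) j) + l i * x (φ k + 1) i := by
      intro k
      rw [hyup (φ k) i hi, if_pos (hφR k)]
    exact tendsto_nhds_unique (Filter.Tendsto.congr heq hlim1) hlim2
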